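/- Let 1 ≤ k ≤ n, let P : ℝ^{2n} → ℝ^{2n} be the orthogonal projector onto the 2k-dimensional subspace corresponding to the coordinates p_1,q_1,…,p_k,q_k, write Ω_k := Σ_{j=1}^k dp_j ∧ dq_j, Ω̂ := Σ_{j=k+1}^n dp_j ∧ dq_j, and let β := (1/k!) Σ_{j=1}^k C(k,j) Ω_k^{k−j} ∧ Ω̂^j. Then for all smooth vector fields X and Y on ℝ^{2n} one has P*(ι_X d ι_Y β) = (1/(k−1)!) P*(Ω_k^{k−1} ∧ (ι_X d ι_Y Ω̂)). -/

import Mathlib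

/-!
Lemma 4 (i).  All differential forms are represented concretely: an `r`-form is a map
`ω : ℝ^{2n} → (Fin r → ℝ^{2n}) → ℝ`; the exterior differential `extd`, the interior
product `iprod` and the pullback `pullf` (here only pullbacks by the linear projector
`P` occur) are given by their usual coordinate-free formulas.  The wedge product uses
the determinant convention: the wedge of `j` two-forms `w₁,…,w_j` is
`2^{-j} ∑_σ sgn σ ∏ᵢ wᵢ(v_{σ(2i-1)}, v_{σ(2i)})`, and similarly with an extra
one-form factor (`wedge2one`).

To avoid natural subtraction, the `k` of the paper (`1 ≤ k ≤ n`) is `k + 1` here.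
So `P` projects onto the coordinates `p_1,q_1,…,p_{k+1},q_{k+1}` (indices
`< 2(k+1)`), `Ω_{k+1} = ∑_{j≤k+1} dp_j∧dq_j`, `Ω̂ = ∑_{j>k+1} dp_j∧dq_j`,
`β = (1/(k+1)!) ∑_{j=1}^{k+1} C(k+1,j) Ω_{k+1}^{k+1-j} ∧ Ω̂^j`, and the identity reads
`P^*(ι_X d ι_Y β) = (1/k!) P^*(Ω_{k+1}^k ∧ (ι_X d ι_Y Ω̂))`.
-/

open MeasureTheory Metric

noncomputable section

/-- `ℝ^{2n}`, with coordinates `p_j = x_{2j}`, `q_j = x_{2j+1}`, `j = 0,…,n-1`. -/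
abbrev Er (n : ℕ) := EuclideanSpace ℝ (Fin (2 * n))

/-- `∑_{j ∈ S} dp_j ∧ dq_j`. -/
def pairForm (n : ℕ) (S : Finset (Fin n)) (u v : Er n) : ℝ :=
  ∑ j ∈ S,
    (u ⟨2 * j.1, by have := j.2; omega⟩ * v ⟨2 * j.1 + 1, by have := j.2; omega⟩ -
     u ⟨2 * j.1 + 1, by have := j.2; omega⟩ * v ⟨2 * j.1, by have := j.2; omega⟩)

/-- `Ω_{k+1} := ∑_{j=1}^{k+1} dp_j ∧ dq_j`. -/
def OmK (n k : ℕ) : Er n → Er n → ℝ :=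
  pairForm n (Finset.univ.filter fun j => j.1 < k + 1)

/-- `Ω̂ := ∑_{j=k+2}^{n} dp_j ∧ dq_j`. -/
def OmHat (n k : ℕ) : Er n → Er n → ℝ :=
  pairForm n (Finset.univ.filter fun j => k + 1 ≤ j.1)

/-- Wedge product of `j` two-forms (determinant convention), evaluated on `2j`
vectors. -/
def wedge2 (n j : ℕ) (ws : Fin j → (Er n → Er n → ℝ)) (v : Fin (2 * j) → Er n) : ℝ :=
  (1 / 2 ^ j : ℝ) * ∑ σ : Equiv.Perm (Fin (2 * j)),
    ((Equiv.Perm.sign σ : ℤ) : ℝ) * ∏ i : Fin j,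
      ws i (v (σ ⟨2 * i.1, by have := i.2; omega⟩))
           (v (σ ⟨2 * i.1 + 1, by have := i.2; omega⟩))

/-- Wedge product of `j` two-forms and one one-form (determinant convention),
evaluated on `2j + 1` vectors. -/
def wedge2one (n j : ℕ) (ws : Fin j → (Er n → Er n → ℝ)) (lf : Er n → ℝ)
    (v : Fin (2 * j + 1) → Er n) : ℝ :=
  (1 / 2 ^ j : ℝ) * ∑ σ : Equiv.Perm (Fin (2 * j + 1)),
    ((Equiv.Perm.sign σ : ℤ) : ℝ) *
      (∏ i : Fin j,
        ws i (v (σ ⟨2 * i.1, by have := i.2; omega⟩))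
             (v (σ ⟨2 * i.1 + 1, by have := i.2; omega⟩))) *
      lf (v (σ ⟨2 * j, by omega⟩))

/-- The exterior differential of an `r`-form. -/
def extd (n r : ℕ) (ω : Er n → (Fin r → Er n) → ℝ) (x : Er n)
    (v : Fin (r + 1) → Er n) : ℝ :=
  ∑ i : Fin (r + 1),
    (-1 : ℝ) ^ (i : ℕ) * fderiv ℝ (fun y => ω y (v ∘ i.succAbove)) x (v i)

/-- The interior product of an `(r+1)`-form with a vector field. -/
def iprod (n r : ℕ) (X : Er n → Er n) (ω : Er n → (Fin (r + 1) → Er n) → ℝ)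
    (x : Er n) (v : Fin r → Er n) : ℝ :=
  ω x (Fin.cons (X x) v)

/-- The pullback of an `r`-form by a map `P`. -/
def pullf (n r : ℕ) (P : Er n → Er n) (ω : Er n → (Fin r → Er n) → ℝ)
    (x : Er n) (v : Fin r → Er n) : ℝ :=
  ω (P x) fun i => P (v i)

/-- The orthogonal projector onto the span of the coordinates
`p_1,q_1,…,p_{k+1},q_{k+1}`. -/
def projK (n k : ℕ) (x : Er n) : Er n :=
  (WithLp.toLp 2 (fun i : Fin (2 * n) => if i.1 < 2 * k + 2 then x i else 0) : Er n)

/-- The `2(k+1)`-form `β = (1/(k+1)!) ∑_{j=1}^{k+1} C(k+1,j) Ω_{k+1}^{k+1-j} ∧ Ω̂^j`. -/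
def betaF (n k : ℕ) (v : Fin (2 * (k + 1)) → Er n) : ℝ :=
  (1 / (Nat.factorial (k + 1)) : ℝ) *
    ∑ j ∈ Finset.Icc 1 (k + 1), (Nat.choose (k + 1) j : ℝ) *
      wedge2 n (k + 1) (fun i => if i.1 < k + 1 - j then OmK n k else OmHat n k) v

/-- The one-form `ι_X d ι_Y Ω̂` (evaluated at `x` on the vector `w`). -/
def etaXY (n k : ℕ) (X Y : Er n → Er n) (x w : Er n) : ℝ :=
  extd n 1 (fun y (u : Fin 1 → Er n) => OmHat n k (Y y) (u 0)) x
    (Fin.cons (X x) fun _ : Fin 1 => w)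



def castSuccEquiv (N : ℕ) : Fin N ≃ {j : Fin (N + 1) // (fun j : Fin (N+1) => j.1 < N) j} where
  toFun i := ⟨i.castSucc, i.2⟩
  invFun j := ⟨j.1.1, j.2⟩
  left_inv i := rfl
  right_inv j := by ext : 1; exact Fin.ext rfl

/-- Extend a permutation of `Fin N` to `Fin (N+1)` fixing the last element. -/
def extP (N : ℕ) (π : Equiv.Perm (Fin N)) : Equiv.Perm (Fin (N + 1)) :=
  π.extendDomain (castSuccEquiv N)

lemma extP_castSucc (N : ℕ) (π : Equiv.Perm (Fin N)) (i : Fin N) :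
    extP N π i.castSucc = (π i).castSucc :=
  Equiv.Perm.extendDomain_apply_image π (castSuccEquiv N) i

lemma extP_last (N : ℕ) (π : Equiv.Perm (Fin N)) : extP N π (Fin.last N) = Fin.last N :=
  Equiv.Perm.extendDomain_apply_not_subtype π _ (by simp)

lemma sign_extP (N : ℕ) (π : Equiv.Perm (Fin N)) :
    Equiv.Perm.sign (extP N π) = Equiv.Perm.sign π :=
  Equiv.Perm.sign_extendDomain π (castSuccEquiv N)

/-- The cycle sending `last` to `m` and `castSucc i` to `succAbove m i`. -/
def cLast (N : ℕ) (m : Fin (N + 1)) : Equiv.Perm (Fin (N + 1)) :=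
  Fin.revPerm * (Fin.cycleRange m.rev)⁻¹ * Fin.revPerm

lemma cLast_last (N : ℕ) (m : Fin (N + 1)) : cLast N m (Fin.last N) = m := by
  have h0 : Fin.rev (Fin.last N) = 0 := by simp
  have h : (Fin.cycleRange m.rev)⁻¹ (0 : Fin (N+1)) = m.rev := by
    rw [Equiv.Perm.inv_eq_iff_eq]; exact (Fin.cycleRange_self m.rev).symm
  show Fin.rev ((Fin.cycleRange m.rev)⁻¹ (Fin.rev (Fin.last N))) = m
  rw [h0, h, Fin.rev_rev]

lemma cLast_castSucc (N : ℕ) (m : Fin (N + 1)) (i : Fin N) :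
    cLast N m i.castSucc = m.succAbove i := by
  have h1 : (Fin.cycleRange m.rev)⁻¹ (i.rev.succ) = m.rev.succAbove i.rev := by
    rw [Equiv.Perm.inv_eq_iff_eq]; exact (Fin.cycleRange_succAbove m.rev i.rev).symm
  show Fin.rev ((Fin.cycleRange m.rev)⁻¹ (Fin.rev i.castSucc)) = m.succAbove i
  rw [Fin.rev_castSucc, h1, ← Fin.rev_succAbove, Fin.rev_rev]

lemma sign_cLast (N : ℕ) (m : Fin (N + 1)) :
    Equiv.Perm.sign (cLast N m) = (-1) ^ (N - m.1) := by
  have : Equiv.Perm.sign (cLast N m)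
      = Equiv.Perm.sign (Fin.revPerm : Equiv.Perm (Fin (N+1)))
        * (Equiv.Perm.sign (Fin.cycleRange m.rev))⁻¹
        * Equiv.Perm.sign (Fin.revPerm : Equiv.Perm (Fin (N+1))) := by
    simp [cLast]
  rw [this, mul_comm _ ((Equiv.Perm.sign (Fin.cycleRange m.rev))⁻¹), mul_assoc]
  have hrev : Equiv.Perm.sign (Fin.revPerm : Equiv.Perm (Fin (N+1)))
      * Equiv.Perm.sign (Fin.revPerm : Equiv.Perm (Fin (N+1))) = 1 := by
    rw [← map_mul]; simp
  rw [hrev, mul_one, Fin.sign_cycleRange, Fin.val_rev]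
  simp [inv_pow]

/-- Decomposition of a sum over `Perm (Fin (N+1))` according to the image of `last`. -/
lemma perm_decomp (N : ℕ) (f : Equiv.Perm (Fin (N + 1)) → ℝ) :
    ∑ σ : Equiv.Perm (Fin (N + 1)), f σ
      = ∑ m : Fin (N + 1), ∑ π : Equiv.Perm (Fin N), f (cLast N m * extP N π) := by
  have hb : Function.Bijective
      (fun p : Fin (N+1) × Equiv.Perm (Fin N) => cLast N p.1 * extP N p.2) := by
    rw [Fintype.bijective_iff_injective_and_card]
    constructor
    · rintro ⟨m, π⟩ ⟨m', π'⟩ h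
      simp only at h
      have hm : m = m' := by
        have := congrArg (fun σ : Equiv.Perm (Fin (N+1)) => σ (Fin.last N)) h
        simpa [Equiv.Perm.mul_apply, extP_last, cLast_last] using this
      subst hm
      have hπ : extP N π = extP N π' := mul_left_cancel h
      have : π = π' := by
        ext i
        have := congrArg (fun σ : Equiv.Perm (Fin (N+1)) => σ i.castSucc) hπ
        simpa [extP_castSucc, Fin.ext_iff] using this
      simp [this]
    · simp [Fintype.card_perm, Nat.factorial_succ]
  calc ∑ σ : Equiv.Perm (Fin (N + 1)), f σ
      = ∑ p : Fin (N+1) × Equiv.Perm (Fin N), f (cLast N p.1 * extP N p.2) :=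
        (Fintype.sum_bijective _ hb _ f (fun p => rfl)).symm
    _ = _ := by rw [Fintype.sum_prod_type]

section Lemmas
open Equiv Fin

/-- Vectors supported on the first `2k+2` coordinates. -/
def IsProjV (n k : ℕ) (u : Er n) : Prop := ∀ l : Fin (2 * n), 2 * k + 2 ≤ l.1 → u l = 0

lemma isProjV_projK (n k : ℕ) (x : Er n) : IsProjV n k (projK n k x) := by
  intro l hl
  show (if l.1 < 2 * k + 2 then x l else 0) = 0
  rw [if_neg (by omega)]

lemma OmHat_zero_left (n k : ℕ) {u : Er n} (hu : IsProjV n k u) (w : Er n) :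
    OmHat n k u w = 0 := by
  unfold OmHat pairForm
  refine Finset.sum_eq_zero fun j hj => ?_
  simp only [Finset.mem_filter, Finset.mem_univ, true_and] at hj
  have hb := j.2
  rw [hu ⟨2 * j.1, by omega⟩ (show 2 * k + 2 ≤ 2 * j.1 by omega),
    hu ⟨2 * j.1 + 1, by omega⟩ (show 2 * k + 2 ≤ 2 * j.1 + 1 by omega)]
  ring

lemma OmHat_zero_right (n k : ℕ) {u : Er n} (hu : IsProjV n k u) (w : Er n) :
    OmHat n k w u = 0 := by
  unfold OmHat pairForm
  refine Finset.sum_eq_zero fun j hj => ?_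
  simp only [Finset.mem_filter, Finset.mem_univ, true_and] at hj
  have hb := j.2
  rw [hu ⟨2 * j.1, by omega⟩ (show 2 * k + 2 ≤ 2 * j.1 by omega),
    hu ⟨2 * j.1 + 1, by omega⟩ (show 2 * k + 2 ≤ 2 * j.1 + 1 by omega)]
  ring

lemma OmHat_swap (n k : ℕ) (u w : Er n) : OmHat n k w u = -OmHat n k u w := by
  unfold OmHat pairForm
  rw [← Finset.sum_neg_distrib]
  exact Finset.sum_congr rfl fun j _ => by ring

lemma negOnePow_mod (a : ℕ) : ((-1 : ℝ)) ^ a = (-1) ^ (a % 2) := by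
  conv_lhs => rw [← Nat.div_add_mod a 2]
  rw [pow_add, pow_mul, neg_one_sq, one_pow, one_mul]

lemma negOnePow_congr {a b : ℕ} (h : a % 2 = b % 2) : ((-1 : ℝ)) ^ a = (-1) ^ b := by
  rw [negOnePow_mod a, negOnePow_mod b, h]

/-- `OmHat n k · b` as a continuous linear map. -/
def omHatCLM (n k : ℕ) (b : Er n) : Er n →L[ℝ] ℝ :=
  ∑ j ∈ Finset.univ.filter (fun j : Fin n => k + 1 ≤ j.1),
    (b ⟨2 * j.1 + 1, by have := j.2; omega⟩ •
        EuclideanSpace.proj (⟨2 * j.1, by have := j.2; omega⟩ : Fin (2 * n))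
      - b ⟨2 * j.1, by have := j.2; omega⟩ •
        EuclideanSpace.proj (⟨2 * j.1 + 1, by have := j.2; omega⟩ : Fin (2 * n)))

lemma omHatCLM_apply (n k : ℕ) (b u : Er n) : omHatCLM n k b u = OmHat n k u b := by
  unfold omHatCLM OmHat pairForm
  rw [ContinuousLinearMap.sum_apply]
  exact Finset.sum_congr rfl fun j _ => by
    simp [PiLp.proj_apply]; ring

lemma hasFDerivAt_omHat (n k : ℕ) {Y : Er n → Er n} (hY : ContDiff ℝ (⊤ : ℕ∞) Y)
    (b x : Er n) :
    HasFDerivAt (fun y => OmHat n k (Y y) b)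
      ((omHatCLM n k b).comp (fderiv ℝ Y x)) x := by
  have h1 := (hY.differentiable (by simp) x).hasFDerivAt
  have h2 := (omHatCLM n k b).hasFDerivAt.comp x h1
  have h3 : (fun y => OmHat n k (Y y) b) = ⇑(omHatCLM n k b) ∘ Y := by
    funext y
    simp [Function.comp, omHatCLM_apply]
  rw [h3]; exact h2

lemma fderiv_const_mul_omHat (n k : ℕ) {Y : Er n → Er n} (hY : ContDiff ℝ (⊤ : ℕ∞) Y)
    (C : ℝ) (b x w : Er n) :
    fderiv ℝ (fun y => C * OmHat n k (Y y) b) x w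
      = C * OmHat n k (fderiv ℝ Y x w) b := by
  have h := (hasFDerivAt_omHat n k hY b x).const_mul C
  rw [h.fderiv]
  simp [omHatCLM_apply]

lemma fderiv_omHat (n k : ℕ) {Y : Er n → Er n} (hY : ContDiff ℝ (⊤ : ℕ∞) Y)
    (b x w : Er n) :
    fderiv ℝ (fun y => OmHat n k (Y y) b) x w = OmHat n k (fderiv ℝ Y x w) b := by
  rw [(hasFDerivAt_omHat n k hY b x).fderiv]
  simp [omHatCLM_apply]

lemma etaXY_eval (n k : ℕ) (X Y : Er n → Er n) (hY : ContDiff ℝ (⊤ : ℕ∞) Y) (x w : Er n) :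
    etaXY n k X Y x w
      = OmHat n k (fderiv ℝ Y x (X x)) w - OmHat n k (fderiv ℝ Y x w) (X x) := by
  unfold etaXY extd
  rw [Fin.sum_univ_two]
  norm_num
  rw [fderiv_omHat n k hY w x (X x), fderiv_omHat n k hY (X x) x w]
  ring

end Lemmas

section Claims
open Equiv Fin

/-- Expansion of `wedge2one` along the distinguished (one-form) slot. -/
lemma wedge2one_expand (n k : ℕ) (ws : Fin k → Er n → Er n → ℝ) (lf : Er n → ℝ)
    (w : Fin (2 * k + 1) → Er n) :
    wedge2one n k ws lf w
      = ∑ m : Fin (2 * k + 1),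
          (-1 : ℝ) ^ (m.1) * lf (w m) * wedge2 n k ws (w ∘ m.succAbove) := by
  unfold wedge2one
  rw [perm_decomp (2 * k)]
  rw [Finset.mul_sum]
  refine Finset.sum_congr rfl fun m _ => ?_
  have key : ∀ (t : ℕ) (h : t < 2 * k) (h2 : t < 2 * k + 1) (π : Equiv.Perm (Fin (2 * k))),
      (cLast (2 * k) m * extP (2 * k) π) ⟨t, h2⟩ = m.succAbove (π ⟨t, h⟩) := by
    intro t h h2 π
    have ht : (⟨t, h2⟩ : Fin (2 * k + 1)) = (⟨t, h⟩ : Fin (2 * k)).castSucc := rfl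
    rw [ht, Equiv.Perm.mul_apply, extP_castSucc, cLast_castSucc]
  have keyl : ∀ π : Equiv.Perm (Fin (2 * k)),
      (cLast (2 * k) m * extP (2 * k) π) ⟨2 * k, by omega⟩ = m := by
    intro π
    have hl : (⟨2 * k, by omega⟩ : Fin (2 * k + 1)) = Fin.last (2 * k) := rfl
    rw [hl, Equiv.Perm.mul_apply, extP_last, cLast_last]
  have hsign : ∀ π : Equiv.Perm (Fin (2 * k)),
      ((Equiv.Perm.sign (cLast (2 * k) m * extP (2 * k) π) : ℤ) : ℝ)
        = (-1 : ℝ) ^ (m.1) * ((Equiv.Perm.sign π : ℤ) : ℝ) := by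
    intro π
    rw [map_mul, sign_cLast, sign_extP]
    push_cast
    rw [negOnePow_congr (show (2 * k - m.1) % 2 = m.1 % 2 by have := m.2; omega)]
  have hbody : ∀ π : Equiv.Perm (Fin (2 * k)),
      ((Equiv.Perm.sign (cLast (2 * k) m * extP (2 * k) π) : ℤ) : ℝ)
        * (∏ i : Fin k,
            ws i (w ((cLast (2 * k) m * extP (2 * k) π) ⟨2 * i.1, by have := i.2; omega⟩))
                 (w ((cLast (2 * k) m * extP (2 * k) π) ⟨2 * i.1 + 1, by have := i.2; omega⟩)))
        * lf (w ((cLast (2 * k) m * extP (2 * k) π) ⟨2 * k, by omega⟩))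
      = ((-1 : ℝ) ^ (m.1) * lf (w m))
        * (((Equiv.Perm.sign π : ℤ) : ℝ)
          * ∏ i : Fin k,
              ws i (w (m.succAbove (π ⟨2 * i.1, by have := i.2; omega⟩)))
                   (w (m.succAbove (π ⟨2 * i.1 + 1, by have := i.2; omega⟩)))) := by
    intro π
    rw [keyl π, hsign π]
    rw [Finset.prod_congr rfl (fun (i : Fin k) _ => by
      rw [key (2 * i.1) (by have := i.2; omega) (by have := i.2; omega) π,
        key (2 * i.1 + 1) (by have := i.2; omega) (by have := i.2; omega) π])]
    ring
  rw [Finset.sum_congr rfl fun π _ => hbody π]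
  rw [← Finset.mul_sum]
  unfold wedge2
  simp only [Function.comp_apply]
  ring

end Claims

section Claims2
open Equiv Fin

/-- Expansion of a `(k+1)`-fold `wedge2` along the last two-form factor. -/
lemma wedge2_expand (n k : ℕ) (ws : Fin (k + 1) → Er n → Er n → ℝ)
    (v : Fin (2 * k + 1 + 1) → Er n) :
    wedge2 n (k + 1) ws v
      = (1 / 2 : ℝ) * ∑ m : Fin (2 * k + 1 + 1),
          (-1 : ℝ) ^ (m.1 + 1) *
            wedge2one n k (fun i => ws i.castSucc) (fun z => ws (Fin.last k) z (v m))
              (v ∘ m.succAbove) := by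
  have h0 : wedge2 n (k + 1) ws v
      = (1 / 2 ^ (k + 1) : ℝ) * ∑ σ : Equiv.Perm (Fin (2 * k + 1 + 1)),
          ((Equiv.Perm.sign σ : ℤ) : ℝ) * ∏ i : Fin (k + 1),
            ws i (v (σ ⟨2 * i.1, by have := i.2; omega⟩))
                 (v (σ ⟨2 * i.1 + 1, by have := i.2; omega⟩)) := rfl
  rw [h0, perm_decomp (2 * k + 1), Finset.mul_sum, Finset.mul_sum]
  refine Finset.sum_congr rfl fun m _ => ?_
  have key : ∀ (t : ℕ) (h : t < 2 * k + 1) (h2 : t < 2 * k + 1 + 1)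
      (τ : Equiv.Perm (Fin (2 * k + 1))),
      (cLast (2 * k + 1) m * extP (2 * k + 1) τ) ⟨t, h2⟩ = m.succAbove (τ ⟨t, h⟩) := by
    intro t h h2 τ
    have ht : (⟨t, h2⟩ : Fin (2 * k + 1 + 1)) = (⟨t, h⟩ : Fin (2 * k + 1)).castSucc := rfl
    rw [ht, Equiv.Perm.mul_apply, extP_castSucc, cLast_castSucc]
  have keyl : ∀ τ : Equiv.Perm (Fin (2 * k + 1)),
      (cLast (2 * k + 1) m * extP (2 * k + 1) τ) ⟨2 * k + 1, by omega⟩ = m := by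
    intro τ
    have hl : (⟨2 * k + 1, by omega⟩ : Fin (2 * k + 1 + 1)) = Fin.last (2 * k + 1) := rfl
    rw [hl, Equiv.Perm.mul_apply, extP_last, cLast_last]
  have hsign : ∀ τ : Equiv.Perm (Fin (2 * k + 1)),
      ((Equiv.Perm.sign (cLast (2 * k + 1) m * extP (2 * k + 1) τ) : ℤ) : ℝ)
        = (-1 : ℝ) ^ (m.1 + 1) * ((Equiv.Perm.sign τ : ℤ) : ℝ) := by
    intro τ
    rw [map_mul, sign_cLast, sign_extP]
    push_cast
    rw [negOnePow_congr (show (2 * k + 1 - m.1) % 2 = (m.1 + 1) % 2 by have := m.2; omega)]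
  have hbody : ∀ τ : Equiv.Perm (Fin (2 * k + 1)),
      ((Equiv.Perm.sign (cLast (2 * k + 1) m * extP (2 * k + 1) τ) : ℤ) : ℝ)
        * ∏ i : Fin (k + 1),
            ws i (v ((cLast (2 * k + 1) m * extP (2 * k + 1) τ) ⟨2 * i.1, by have := i.2; omega⟩))
                 (v ((cLast (2 * k + 1) m * extP (2 * k + 1) τ) ⟨2 * i.1 + 1, by have := i.2; omega⟩))
      = (-1 : ℝ) ^ (m.1 + 1)
        * (((Equiv.Perm.sign τ : ℤ) : ℝ)
          * (∏ i : Fin k,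
              ws i.castSucc (v (m.succAbove (τ ⟨2 * i.1, by have := i.2; omega⟩)))
                   (v (m.succAbove (τ ⟨2 * i.1 + 1, by have := i.2; omega⟩))))
          * ws (Fin.last k) (v (m.succAbove (τ ⟨2 * k, by omega⟩))) (v m)) := by
    intro τ
    rw [hsign τ]
    rw [Fin.prod_univ_castSucc (fun i : Fin (k + 1) =>
      ws i (v ((cLast (2 * k + 1) m * extP (2 * k + 1) τ) ⟨2 * i.1, by have := i.2; omega⟩))
           (v ((cLast (2 * k + 1) m * extP (2 * k + 1) τ) ⟨2 * i.1 + 1, by have := i.2; omega⟩)))]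
    simp only [Fin.coe_castSucc, Fin.val_last]
    rw [keyl τ]
    rw [key (2 * k) (by omega) (by omega) τ]
    rw [Finset.prod_congr rfl (fun (i : Fin k) _ => by
      rw [key (2 * i.1) (by have := i.2; omega) (by have := i.2; omega) τ,
        key (2 * i.1 + 1) (by have := i.2; omega) (by have := i.2; omega) τ])]
    ring
  rw [Finset.sum_congr rfl fun τ _ => hbody τ]
  rw [← Finset.mul_sum]
  unfold wedge2one
  simp only [Function.comp_apply]
  rw [Finset.mul_sum, ← Finset.mul_sum]
  rw [show (2:ℝ)^(k+1) = 2 * 2^k by ring_nf]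
  field_simp

/-- A `wedge2one` whose one-form vanishes on the given vectors is zero. -/
lemma wedge2one_zero (n k : ℕ) (ws : Fin k → Er n → Er n → ℝ) (lf : Er n → ℝ)
    (w : Fin (2 * k + 1) → Er n) (h : ∀ i, lf (w i) = 0) :
    wedge2one n k ws lf w = 0 := by
  unfold wedge2one
  rw [Finset.sum_eq_zero fun σ _ => by rw [h]; ring]
  ring

/-- A `wedge2` containing an `OmHat` factor vanishes on projected vectors. -/
lemma wedge2_zero (n k j : ℕ) (ws : Fin j → Er n → Er n → ℝ) (i₀ : Fin j)
    (hws : ws i₀ = OmHat n k) (u : Fin (2 * j) → Er n) (hu : ∀ i, IsProjV n k (u i)) :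
    wedge2 n j ws u = 0 := by
  unfold wedge2
  rw [Finset.sum_eq_zero fun σ _ => ?_]
  · ring
  · rw [Finset.prod_eq_zero (Finset.mem_univ i₀)]
    · ring
    · rw [hws, OmHat_zero_left n k (hu _)]

end Claims2

section Claims3
open Equiv Fin

lemma isProjV_cons {n k M : ℕ} (a : Er n) (w : Fin M → Er n) (hw : ∀ i, IsProjV n k (w i))
    {t : Fin (M + 1)} (ht : t ≠ 0) : IsProjV n k ((Fin.cons a w : Fin (M + 1) → Er n) t) := by
  obtain ⟨s, rfl⟩ := Fin.eq_succ_of_ne_zero ht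
  rw [Fin.cons_succ]; exact hw s

/-- Any single term of `betaF` vanishes if among any two slot vectors one is projected. -/
lemma betaF_term_zero (n k j : ℕ) (hj : 1 ≤ j) (v : Fin (2 * k + 1 + 1) → Er n)
    (hv : ∀ m m' : Fin (2 * k + 1 + 1), m ≠ m' → IsProjV n k (v m) ∨ IsProjV n k (v m')) :
    wedge2 n (k + 1) (fun i => if i.1 < k + 1 - j then OmK n k else OmHat n k) v = 0 := by
  rw [wedge2_expand]
  rw [Finset.sum_eq_zero fun m _ => ?_, mul_zero]
  rw [wedge2one_zero, mul_zero]
  intro i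
  simp only [Function.comp_apply, Fin.val_last]
  rw [if_neg (by omega)]
  rcases hv (m.succAbove i) m (Fin.succAbove_ne m i) with h | h
  · exact OmHat_zero_left n k h _
  · exact OmHat_zero_right n k h _

lemma claimA (n k : ℕ) (a : Er n) (w : Fin (2 * k + 1) → Er n)
    (hw : ∀ i, IsProjV n k (w i)) :
    betaF n k (Fin.cons a w) = 0 := by
  unfold betaF
  rw [Finset.sum_eq_zero fun j hj => ?_, mul_zero]
  simp only [Finset.mem_Icc] at hj
  rw [betaF_term_zero n k j hj.1 _ ?_, mul_zero]
  intro m m' hne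
  by_cases hm : m = 0
  · right
    exact isProjV_cons a w hw (by rw [hm] at hne; exact hne.symm)
  · left
    exact isProjV_cons a w hw hm

end Claims3

section Claims4
open Equiv Fin

lemma isProjV_cons2 {n k : ℕ} (a b : Er n) (c : Fin (2 * k) → Er n)
    (hc : ∀ i, IsProjV n k (c i)) {t : Fin (2 * k + 1 + 1)} (ht : 2 ≤ t.1) :
    IsProjV n k ((Fin.cons a (Fin.cons b c) : Fin (2 * k + 1 + 1) → Er n) t) := by
  obtain ⟨s, rfl⟩ := Fin.eq_succ_of_ne_zero (show t ≠ 0 by rintro rfl; simp at ht)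
  rw [Fin.cons_succ]
  obtain ⟨r, rfl⟩ := Fin.eq_succ_of_ne_zero (show s ≠ 0 by rintro rfl; simp at ht)
  rw [Fin.cons_succ]
  exact hc r

lemma claimB (n k : ℕ) (a b : Er n) (c : Fin (2 * k) → Er n)
    (hc : ∀ i, IsProjV n k (c i)) :
    betaF n k (Fin.cons a (Fin.cons b c))
      = (1 / (Nat.factorial k) : ℝ)
        * (OmHat n k a b * wedge2 n k (fun _ => OmK n k) c) := by
  have hv2 : ∀ t : Fin (2 * k + 1 + 1), 2 ≤ t.1 →
      IsProjV n k ((Fin.cons a (Fin.cons b c) : Fin (2 * k + 1 + 1) → Er n) t) :=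
    fun t ht => isProjV_cons2 a b c hc ht
  unfold betaF
  rw [Finset.sum_eq_single_of_mem 1 (Finset.mem_Icc.mpr ⟨le_refl 1, by omega⟩) ?side]
  case side =>
    intro j hj hj1
    simp only [Finset.mem_Icc] at hj
    have hk1 : 1 ≤ k := by omega
    rw [wedge2_expand]
    rw [Finset.sum_eq_zero fun m _ => ?_, mul_zero, mul_zero]
    by_cases hm2 : 2 ≤ m.1
    · rw [wedge2one_zero, mul_zero]
      intro i
      simp only [Function.comp_apply, Fin.val_last]
      rw [if_neg (by omega)]
      exact OmHat_zero_right n k (hv2 m hm2) _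
    · rw [wedge2one_expand]
      rw [Finset.sum_eq_zero fun m' _ => ?_, mul_zero]
      by_cases hs2 : 2 ≤ (m.succAbove m').1
      · simp only [Function.comp_apply, Fin.val_last]
        rw [if_neg (by omega), OmHat_zero_left n k (hv2 _ hs2) _]
        ring
      · rw [wedge2_zero n k k _ ⟨k - 1, by omega⟩ ?hws _ ?hu, mul_zero]
        case hws =>
          simp only [Fin.coe_castSucc]
          rw [if_neg (by omega)]
        case hu =>
          intro t
          simp only [Function.comp_apply]
          refine hv2 _ ?_
          have h1 : m.succAbove (m'.succAbove t) ≠ m := Fin.succAbove_ne m _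
          have h2 : m.succAbove (m'.succAbove t) ≠ m.succAbove m' := by
            intro h
            exact Fin.succAbove_ne m' t (Fin.succAbove_right_injective h)
          have h3 : m.succAbove m' ≠ m := Fin.succAbove_ne m m'
          have e1 : (m.succAbove (m'.succAbove t)).1 ≠ m.1 := fun h => h1 (Fin.ext h)
          have e2 : (m.succAbove (m'.succAbove t)).1 ≠ (m.succAbove m').1 :=
            fun h => h2 (Fin.ext h)
          have e3 : (m.succAbove m').1 ≠ m.1 := fun h => h3 (Fin.ext h)
          omega
  -- main term j = 1
  simp only [Nat.add_sub_cancel, Nat.choose_one_right]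
  rw [wedge2_expand]
  rw [Fin.sum_univ_succ]
  rw [Fin.sum_univ_succ]
  rw [Finset.sum_eq_zero fun m _ => ?rest]
  case rest =>
    rw [wedge2one_zero, mul_zero]
    intro i
    simp only [Function.comp_apply, Fin.val_last]
    rw [if_neg (by omega)]
    refine OmHat_zero_right n k (hv2 _ ?_) _
    simp [Fin.val_succ]
  -- clean up the ifs and cons applications
  simp only [Fin.val_last, lt_self_iff_false, if_false, Fin.coe_castSucc, Fin.is_lt,
    if_true, Fin.cons_zero, Fin.cons_succ, Fin.val_succ, Fin.val_zero]
  have hM0 : wedge2one n k (fun _ : Fin k => OmK n k) (fun z => OmHat n k z a)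
      ((Fin.cons a (Fin.cons b c) : Fin (2 * k + 1 + 1) → Er n) ∘ Fin.succAbove 0)
      = OmHat n k b a * wedge2 n k (fun _ : Fin k => OmK n k) c := by
    rw [wedge2one_expand, Fin.sum_univ_succ]
    have e0 : ((Fin.cons a (Fin.cons b c) : Fin (2 * k + 1 + 1) → Er n) ∘ Fin.succAbove 0)
        ∘ Fin.succAbove (0 : Fin (2 * k + 1)) = c := by
      funext t
      simp [Fin.zero_succAbove, Fin.cons_succ]
    rw [e0]
    rw [Finset.sum_eq_zero fun m' _ => ?_]
    · simp [Fin.zero_succAbove, Fin.cons_succ, Fin.cons_zero]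
    · have hz : OmHat n k (((Fin.cons a (Fin.cons b c) : Fin (2 * k + 1 + 1) → Er n)
          ∘ Fin.succAbove 0) m'.succ) a = 0 := by
        refine OmHat_zero_left n k ?_ a
        simp only [Function.comp_apply, Fin.zero_succAbove]
        exact hv2 _ (by simp [Fin.val_succ])
      simp only [hz]
      ring
  have hM1 : wedge2one n k (fun _ : Fin k => OmK n k) (fun z => OmHat n k z b)
      ((Fin.cons a (Fin.cons b c) : Fin (2 * k + 1 + 1) → Er n)
        ∘ Fin.succAbove (Fin.succ 0))
      = OmHat n k a b * wedge2 n k (fun _ : Fin k => OmK n k) c := by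
    rw [wedge2one_expand, Fin.sum_univ_succ]
    have e1 : ((Fin.cons a (Fin.cons b c) : Fin (2 * k + 1 + 1) → Er n)
        ∘ Fin.succAbove (Fin.succ 0)) ∘ Fin.succAbove (0 : Fin (2 * k + 1)) = c := by
      funext t
      simp [Fin.zero_succAbove, Fin.succ_succAbove_succ, Fin.cons_succ]
    rw [e1]
    rw [Finset.sum_eq_zero fun m' _ => ?_]
    · simp [Fin.succ_succAbove_zero, Fin.cons_zero]
    · have hz : OmHat n k (((Fin.cons a (Fin.cons b c) : Fin (2 * k + 1 + 1) → Er n)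
          ∘ Fin.succAbove (Fin.succ 0)) m'.succ) b = 0 := by
        refine OmHat_zero_left n k ?_ b
        simp only [Function.comp_apply, Fin.succ_succAbove_succ, Fin.zero_succAbove]
        exact hv2 _ (by simp [Fin.val_succ])
      simp only [hz]
      ring
  rw [hM0, hM1, OmHat_swap n k a b]
  have hfac : ((k + 1).factorial : ℝ) = (k + 1) * (k.factorial : ℝ) := by
    push_cast [Nat.factorial_succ]
    ring
  rw [hfac]
  have hkf : (k.factorial : ℝ) ≠ 0 := Nat.cast_ne_zero.mpr (Nat.factorial_ne_zero k)
  have hk1 : ((k : ℝ) + 1) ≠ 0 := by positivity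
  field_simp
  push_cast
  ring
end Claims4

/-- **Lemma 4 (i).**  For all smooth vector fields `X`, `Y` on `ℝ^{2n}`:
`P^*(ι_X d ι_Y β) = (1/k!) P^*(Ω_{k+1}^k ∧ (ι_X d ι_Y Ω̂))`
(with the `k` of the paper equal to `k + 1` here). -/
theorem pullback_beta_formula (n k : ℕ) (hkn : k + 1 ≤ n)
    (X Y : Er n → Er n) (hX : ContDiff ℝ (⊤ : ℕ∞) X) (hY : ContDiff ℝ (⊤ : ℕ∞) Y) :
    ∀ (x : Er n) (v : Fin (2 * k + 1) → Er n),
      pullf n (2 * k + 1) (projK n k)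
        (iprod n (2 * k + 1) X
          (extd n (2 * k + 1) (iprod n (2 * k + 1) Y (fun _ w => betaF n k w)))) x v =
      (1 / (Nat.factorial k) : ℝ) *
        pullf n (2 * k + 1) (projK n k)
          (fun y w => wedge2one n k (fun _ => OmK n k) (etaXY n k X Y y) w) x v := by
  intro x v
  unfold pullf iprod extd
  beta_reduce
  rw [Fin.sum_univ_succ]
  -- the `i = 0` term vanishes
  have hfz : (fun y => betaF n k (Fin.cons (Y y)
      ((Fin.cons (X (projK n k x)) fun i => projK n k (v i)) ∘ Fin.succAbove 0)))
      = fun _ => (0 : ℝ) := by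
    funext y
    rw [claimA n k (Y y) _ fun i => ?_]
    simp only [Function.comp_apply, Fin.zero_succAbove, Fin.cons_succ]
    exact isProjV_projK n k (v i)
  rw [hfz]
  rw [show fderiv ℝ (fun _ : Er n => (0:ℝ)) (projK n k x) = 0 from fderiv_const_apply 0]
  simp only [ContinuousLinearMap.zero_apply, mul_zero, zero_add]
  -- the remaining terms
  have hterm : ∀ m : Fin (2 * k + 1),
      (-1 : ℝ) ^ (m.succ : ℕ) *
        (fderiv ℝ (fun y => betaF n k (Fin.cons (Y y)
            ((Fin.cons (X (projK n k x)) fun i => projK n k (v i)) ∘ m.succ.succAbove)))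
          (projK n k x))
          ((Fin.cons (X (projK n k x)) (fun i => projK n k (v i)) : Fin (2 * k + 1 + 1) → Er n) m.succ)
      = (-1 : ℝ) ^ (m.1 + 1) *
          ((1 / (Nat.factorial k : ℝ))
            * wedge2 n k (fun _ => OmK n k) ((fun i => projK n k (v i)) ∘ m.succAbove)
            * OmHat n k (fderiv ℝ Y (projK n k x) (projK n k (v m))) (X (projK n k x))) := by
    intro m
    have ecomp : (Fin.cons (X (projK n k x)) fun i => projK n k (v i)) ∘ m.succ.succAbove
        = Fin.cons (X (projK n k x)) ((fun i => projK n k (v i)) ∘ m.succAbove) := by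
      funext l
      refine Fin.cases ?_ (fun t => ?_) l
      · rw [Function.comp_apply, Fin.succ_succAbove_zero, Fin.cons_zero, Fin.cons_zero]
      · rw [Function.comp_apply, Fin.succ_succAbove_succ, Fin.cons_succ, Fin.cons_succ,
          Function.comp_apply]
    rw [ecomp]
    have hfn : (fun y => betaF n k (Fin.cons (Y y)
        (Fin.cons (X (projK n k x)) ((fun i => projK n k (v i)) ∘ m.succAbove))))
        = fun y => ((1 / (Nat.factorial k : ℝ))
            * wedge2 n k (fun _ => OmK n k) ((fun i => projK n k (v i)) ∘ m.succAbove))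
          * OmHat n k (Y y) (X (projK n k x)) := by
      funext y
      rw [claimB n k (Y y) (X (projK n k x)) _ fun i => by
        simp only [Function.comp_apply]; exact isProjV_projK n k _]
      ring
    rw [hfn, fderiv_const_mul_omHat n k hY _ _ _ _, Fin.cons_succ, Fin.val_succ]
  rw [Finset.sum_congr rfl fun m _ => hterm m]
  rw [wedge2one_expand, Finset.mul_sum]
  refine Finset.sum_congr rfl fun m _ => ?_
  have heta2 : etaXY n k X Y (projK n k x) ((fun i => projK n k (v i)) m)
      = - OmHat n k (fderiv ℝ Y (projK n k x) (projK n k (v m))) (X (projK n k x)) := by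
    rw [etaXY_eval n k X Y hY]
    rw [OmHat_zero_right n k (isProjV_projK n k (v m)) _]
    ring
  rw [heta2, pow_succ]
  ring
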